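/- arXiv:2210.11747 — 3 statements merged into one kernel-verified Lean document; each statement's English description precedes it below -/
import Mathlib

section
/- Let P, P̃, σ₁², σ₂², |h|², |h̃|², α, L be positive real numbers with L < |h̃|²·S̃NR, where SNR = P/σ₁² and S̃NR = P̃/σ₂². Let ε, N₂, N₁ be mutually independent square-integrable real random variables with mean 0, Var(ε) = α, Var(N₂) = σ₂²/(2·|h̃|²), Var(N₁) = σ₁²/(2·|h|²). Set λ = √(L·P/P̃), γ = √((P̃/(2L) − σ₂²/(2|h̃|²))/α), Y = λ·γ·ε + λ·N₂ + N₁, and β = E[Y·ε]/E[Y²]. Then β = (√(2α)/σ₁) · √(SNR·(1 − L/(|h̃|²·S̃NR))) / (SNR + |h|^{−2}). -/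
/-!
Numerator and denominator of `β` are second moments of linear combinations of the independent
centred variables `ε, N₂, N₁`, so only the diagonal terms survive:
`β = λγα / (λ²γ²α + λ²σ₂²/(2|h̃|²) + σ₁²/(2|h|²))`. The choice of `λ` and `γ` makes the power
spent on the feedforward signal `λ²(γ²α + σ₂²/(2|h̃|²))` exactly `P/2`; the rest is algebra
with square roots.
-/

open MeasureTheory ProbabilityTheory

namespace ProbabilityTheory

variable {Ω ι : Type*} [MeasurableSpace Ω] {μ : Measure Ω} [Fintype ι] {X : ι → Ω → ℝ}

lemma covariance_fun_sum_mul_fun_sum_mul_of_pairwise_indepFun [IsFiniteMeasure μ]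
    (hX : ∀ i, MemLp (X i) 2 μ) (hindep : Pairwise fun i j ↦ IndepFun (X i) (X j) μ)
    (a b : ι → ℝ) :
    cov[fun ω ↦ ∑ i, a i * X i ω, fun ω ↦ ∑ i, b i * X i ω; μ]
      = ∑ i, a i * b i * Var[X i; μ] := by
  classical
  rw [covariance_fun_sum_fun_sum (fun i ↦ (hX i).const_mul (a i))
    (fun i ↦ (hX i).const_mul (b i))]
  refine Finset.sum_congr rfl fun i _ ↦ ?_
  rw [Finset.sum_eq_single i]
  · rw [covariance_const_mul_left, covariance_const_mul_right,
      covariance_self (hX i).aestronglyMeasurable.aemeasurable]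
    ring
  · intro j _ hji
    rw [covariance_const_mul_left, covariance_const_mul_right,
      (hindep hji.symm).covariance_eq_zero (hX i) (hX j), mul_zero, mul_zero]
  · simp

lemma integral_sum_mul_mul_sum_mul_of_pairwise_indepFun [IsProbabilityMeasure μ]
    (hX : ∀ i, MemLp (X i) 2 μ) (hmean : ∀ i, μ[X i] = 0)
    (hindep : Pairwise fun i j ↦ IndepFun (X i) (X j) μ) (a b : ι → ℝ) :
    ∫ ω, (∑ i, a i * X i ω) * (∑ i, b i * X i ω) ∂μ = ∑ i, a i * b i * Var[X i; μ] := by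
  have hmemLp (c : ι → ℝ) : MemLp (fun ω ↦ ∑ i, c i * X i ω) 2 μ :=
    memLp_finsetSum _ fun i _ ↦ (hX i).const_mul (c i)
  have hcentered (c : ι → ℝ) : μ[fun ω ↦ ∑ i, c i * X i ω] = 0 := by
    rw [integral_finsetSum _ fun i _ ↦ ((hX i).integrable one_le_two).const_mul (c i)]
    simp [integral_const_mul, hmean]
  rw [← covariance_fun_sum_mul_fun_sum_mul_of_pairwise_indepFun hX hindep,
    covariance_eq_sub (hmemLp a) (hmemLp b), hcentered a, zero_mul, sub_zero]
  rfl

end ProbabilityTheory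

lemma mmse_coefficient_eq {P Pt s1 s2 hsq htsq α L : ℝ}
    (hP : 0 < P) (hPt : 0 < Pt) (hs1 : 0 < s1) (hs2 : 0 < s2)
    (hhsq : 0 < hsq) (hhtsq : 0 < htsq) (hα : 0 < α) (hL : 0 < L)
    (hLlt : L < htsq * (Pt / s2)) :
    let lam := √(L * P / Pt)
    let gam := √((Pt / (2 * L) - s2 / (2 * htsq)) / α)
    lam * gam * α / (lam * gam * (lam * gam) * α + lam * lam * (s2 / (2 * htsq))
        + s1 / (2 * hsq))
      = √(2 * α) / √s1 * √(P / s1 * (1 - L / (htsq * (Pt / s2)))) / (P / s1 + hsq⁻¹) := by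
  intro lam gam
  have hmargin : 0 < 1 - L / (htsq * (Pt / s2)) := by
    rw [sub_pos, div_lt_one (by positivity)]; exact hLlt
  have hgap : Pt / (2 * L) - s2 / (2 * htsq) = Pt / (2 * L) * (1 - L / (htsq * (Pt / s2))) := by
    field_simp
  have hlam : lam * lam = L * P / Pt := Real.mul_self_sqrt (by positivity)
  have hgam : gam * gam = (Pt / (2 * L) - s2 / (2 * htsq)) / α :=
    Real.mul_self_sqrt (by rw [hgap]; positivity)
  have hpower : lam * gam * (lam * gam) * α + lam * lam * (s2 / (2 * htsq)) = P / 2 := by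
    rw [mul_mul_mul_comm, hlam, hgam]; field_simp; ring
  rw [hpower]
  have hlhs : 0 ≤ lam * gam * α / (P / 2 + s1 / (2 * hsq)) := by positivity
  rw [← Real.sqrt_sq hlhs, ← Real.sqrt_sq (by positivity : 0 ≤ √(2 * α) / √s1 *
    √(P / s1 * (1 - L / (htsq * (Pt / s2)))) / (P / s1 + hsq⁻¹))]
  congr 1
  simp only [div_pow, mul_pow, Real.sq_sqrt hs1.le, Real.sq_sqrt (by positivity : 0 ≤ 2 * α),
    Real.sq_sqrt (by positivity : 0 ≤ P / s1 * (1 - L / (htsq * (Pt / s2))))]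
  rw [← mul_pow, sq, mul_mul_mul_comm, hlam, hgam, hgap]
  field_simp

/-- Closed form for the MMSE estimation coefficient `β` in the Schalkwijk–Kailath-type
iteration: with `SNR = P/σ₁²`, `S̃NR = P̃/σ₂²`,
`β = (√(2α)/σ₁)·√(SNR(1 − L/(|h̃|²·S̃NR)))/(SNR + |h|⁻²)`.
Here `s1 = σ₁²`, `s2 = σ₂²`, `hsq = |h|²`, `htsq = |h̃|²`. -/
theorem stmt_7 (P Pt s1 s2 hsq htsq α L : ℝ)
    (hP : 0 < P) (hPt : 0 < Pt) (hs1 : 0 < s1) (hs2 : 0 < s2)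
    (hhsq : 0 < hsq) (hhtsq : 0 < htsq) (hα : 0 < α) (hL : 0 < L)
    (hLlt : L < htsq * (Pt / s2))
    {Ω : Type*} [MeasurableSpace Ω] (μ : Measure Ω) [IsProbabilityMeasure μ]
    (ε N2 N1 : Ω → ℝ)
    (hindep : iIndepFun (m := fun _ : Fin 3 => (inferInstance : MeasurableSpace ℝ))
      ![ε, N2, N1] μ)
    (hε2 : MemLp ε 2 μ) (hN22 : MemLp N2 2 μ) (hN12 : MemLp N1 2 μ)
    (hεmean : ∫ ω, ε ω ∂μ = 0) (hN2mean : ∫ ω, N2 ω ∂μ = 0)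
    (hN1mean : ∫ ω, N1 ω ∂μ = 0)
    (hεvar : variance ε μ = α)
    (hN2var : variance N2 μ = s2 / (2 * htsq))
    (hN1var : variance N1 μ = s1 / (2 * hsq)) :
    (∫ ω, (Real.sqrt (L * P / Pt) * Real.sqrt ((Pt / (2 * L) - s2 / (2 * htsq)) / α) * ε ω
          + Real.sqrt (L * P / Pt) * N2 ω + N1 ω) * ε ω ∂μ) /
      (∫ ω, (Real.sqrt (L * P / Pt) * Real.sqrt ((Pt / (2 * L) - s2 / (2 * htsq)) / α) * ε ω
          + Real.sqrt (L * P / Pt) * N2 ω + N1 ω) ^ 2 ∂μ)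
    = (Real.sqrt (2 * α) / Real.sqrt s1) *
        Real.sqrt ((P / s1) * (1 - L / (htsq * (Pt / s2)))) / (P / s1 + hsq⁻¹) := by
  set lam := √(L * P / Pt)
  set gam := √((Pt / (2 * L) - s2 / (2 * htsq)) / α)
  have hX : ∀ i, MemLp (![ε, N2, N1] i) 2 μ := by
    intro i; fin_cases i <;> assumption
  have hmean : ∀ i, μ[![ε, N2, N1] i] = 0 := by
    intro i; fin_cases i <;> assumption
  have hcov := integral_sum_mul_mul_sum_mul_of_pairwise_indepFun hX hmean
    fun i j hij ↦ hindep.indepFun hij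
  have hnum := hcov ![lam * gam, lam, 1] ![1, 0, 0]
  have hden := hcov ![lam * gam, lam, 1] ![lam * gam, lam, 1]
  simp only [Fin.sum_univ_three, Matrix.cons_val_zero, Matrix.cons_val_one,
    Matrix.cons_val_two, Matrix.head_cons, Matrix.tail_cons, one_mul, mul_one, mul_zero,
    zero_mul, add_zero, hεvar, hN2var, hN1var] at hnum hden
  simp only [sq, hnum, hden]
  exact mmse_coefficient_eq hP hPt hs1 hs2 hhsq hhtsq hα hL hLlt
end

section
/- Let P, P̃, σ₁², σ₂², |h|², |h̃|², α, L be positive real numbers with L < |h̃|²·S̃NR, where SNR = P/σ₁² and S̃NR = P̃/σ₂². Let ε, N₂, N₁ be mutually independent square-integrable real random variables with mean 0, Var(ε) = α, Var(N₂) = σ₂²/(2·|h̃|²), Var(N₁) = σ₁²/(2·|h|²). Set λ = √(L·P/P̃), γ = √((P̃/(2L) − σ₂²/(2|h̃|²))/α), Y = λ·γ·ε + λ·N₂ + N₁, and β = E[Y·ε]/E[Y²]. Then E[(ε − β·Y)²] = α · (1 + SNR·|h|²/(Ψ₁·Ψ₂))^{−1}, where Ψ₁ = 1 + L·|h|²·SNR/(|h̃|²·S̃NR)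 and Ψ₂ = (1 − L/(|h̃|²·S̃NR))^{−1}. -/
/-!
The three variables `ε, N₂, N₁` are centred and independent, hence orthogonal in `L²`, so the
second moment of any linear combination of them is a diagonal quadratic form in the variances.
Writing `Y = kε + Z` with effective noise power `n = E[Z²]`, the residual of the linear estimate
of `ε` from `Y` is `α n / (k²α + n)`. The choice of `γ` makes the received power `k²α + n` equal
to `P/2 + σ₁²/(2|h|²)`, and the ratio then simplifies to `(1 + SNR|h|²/(Ψ₁Ψ₂))⁻¹`.
-/

open MeasureTheory ProbabilityTheory

theorem integral_sum_mul_sum_of_orthogonal {Ω ι : Type*} [MeasurableSpace Ω] {μ : Measure Ω}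
    [Fintype ι] {X : ι → Ω → ℝ} (hX : ∀ i, MemLp (X i) 2 μ)
    (horth : Pairwise fun i j => ∫ ω, X i ω * X j ω ∂μ = 0) (c d : ι → ℝ) :
    ∫ ω, (∑ i, c i * X i ω) * (∑ j, d j * X j ω) ∂μ = ∑ i, c i * d i * ∫ ω, X i ω ^ 2 ∂μ := by
  have hint : ∀ i j, Integrable (fun ω => c i * d j * (X i ω * X j ω)) μ := fun i j =>
    ((hX i).integrable_mul (hX j)).const_mul _
  calc ∫ ω, (∑ i, c i * X i ω) * (∑ j, d j * X j ω) ∂μ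
      = ∫ ω, ∑ i, ∑ j, c i * d j * (X i ω * X j ω) ∂μ := by
        congr with ω
        rw [Finset.sum_mul_sum]
        exact Finset.sum_congr rfl fun _ _ => Finset.sum_congr rfl fun _ _ => by ring
    _ = ∑ i, ∑ j, c i * d j * ∫ ω, X i ω * X j ω ∂μ := by
        rw [integral_finsetSum _ fun i _ => integrable_finsetSum _ fun j _ => hint i j]
        refine Finset.sum_congr rfl fun i _ => ?_
        rw [integral_finsetSum _ fun j _ => hint i j]
        exact Finset.sum_congr rfl fun j _ => integral_const_mul _ _
    _ = ∑ i, c i * d i * ∫ ω, X i ω ^ 2 ∂μ := by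
        refine Finset.sum_congr rfl fun i _ => ?_
        rw [Finset.sum_eq_single i (fun j _ hji => by rw [horth hji.symm, mul_zero]) (by simp)]
        simp only [sq]

theorem integral_sum_mul_sum_of_indepFun {Ω ι : Type*} [MeasurableSpace Ω] {μ : Measure Ω}
    [IsProbabilityMeasure μ] [Fintype ι] {X : ι → Ω → ℝ} (hX : ∀ i, MemLp (X i) 2 μ)
    (hindep : Pairwise fun i j => IndepFun (X i) (X j) μ) (hmean : ∀ i, ∫ ω, X i ω ∂μ = 0)
    (c d : ι → ℝ) :
    ∫ ω, (∑ i, c i * X i ω) * (∑ j, d j * X j ω) ∂μ = ∑ i, c i * d i * variance (X i) μ := by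
  have horth : Pairwise fun i j => ∫ ω, X i ω * X j ω ∂μ = 0 := fun i j hij => by
    dsimp only
    rw [(hindep hij).integral_fun_mul_eq_mul_integral (hX i).aestronglyMeasurable
      (hX j).aestronglyMeasurable, hmean i, zero_mul]
  simp only [integral_sum_mul_sum_of_orthogonal hX horth,
    variance_of_integral_eq_zero (hX _).aemeasurable (hmean _)]

theorem integral_mul_of_iIndepFun_three {Ω : Type*} [MeasurableSpace Ω] {μ : Measure Ω}
    [IsProbabilityMeasure μ] {X₀ X₁ X₂ : Ω → ℝ} (hindep : iIndepFun ![X₀, X₁, X₂] μ)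
    (h₀ : MemLp X₀ 2 μ) (h₁ : MemLp X₁ 2 μ) (h₂ : MemLp X₂ 2 μ)
    (hm₀ : ∫ ω, X₀ ω ∂μ = 0) (hm₁ : ∫ ω, X₁ ω ∂μ = 0) (hm₂ : ∫ ω, X₂ ω ∂μ = 0)
    (p q r p' q' r' : ℝ) :
    ∫ ω, (p * X₀ ω + q * X₁ ω + r * X₂ ω) * (p' * X₀ ω + q' * X₁ ω + r' * X₂ ω) ∂μ
      = p * p' * variance X₀ μ + q * q' * variance X₁ μ + r * r' * variance X₂ μ := by
  simpa [Fin.sum_univ_three] using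
    integral_sum_mul_sum_of_indepFun (X := ![X₀, X₁, X₂])
      (by simp [Fin.forall_fin_succ, h₀, h₁, h₂]) (fun i j hij => hindep.indepFun hij)
      (by simp [Fin.forall_fin_succ, hm₀, hm₁, hm₂]) ![p, q, r] ![p', q', r']

theorem lmmse_residual {k α n : ℝ} (h : k ^ 2 * α + n ≠ 0) :
    (1 - k * α / (k ^ 2 * α + n) * k) ^ 2 * α + (k * α / (k ^ 2 * α + n)) ^ 2 * n
      = α * n / (k ^ 2 * α + n) := by
  field_simp
  ring

theorem contraction_factor_eq {P Pt s1 s2 hsq htsq L : ℝ} (hP : 0 < P) (hPt : 0 < Pt)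
    (hs1 : 0 < s1) (hs2 : 0 < s2) (hhsq : 0 < hsq) (hhtsq : 0 < htsq) (hL : 0 < L)
    (hLlt : L < htsq * (Pt / s2)) :
    (L * P / Pt * (s2 / (2 * htsq)) + s1 / (2 * hsq)) / (P / 2 + s1 / (2 * hsq)) =
      (1 + (P / s1) * hsq /
        ((1 + L * hsq * (P / s1) / (htsq * (Pt / s2))) * (1 - L / (htsq * (Pt / s2)))⁻¹))⁻¹ := by
  have hgap : 0 < 1 - L / (htsq * (Pt / s2)) :=
    sub_pos.mpr ((div_lt_one (by positivity)).mpr hLlt)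
  rw [← one_div, eq_div_iff (by positivity)]
  field_simp
  ring

/-- One-step variance contraction of the decoding error in the Schalkwijk–Kailath-type
iteration: `E[(ε − βY)²] = α·(1 + SNR·|h|²/(Ψ₁Ψ₂))⁻¹`, where `SNR = P/σ₁²`,
`S̃NR = P̃/σ₂²`, `Ψ₁ = 1 + L|h|²SNR/(|h̃|²S̃NR)` and `Ψ₂ = (1 − L/(|h̃|²S̃NR))⁻¹`.
Here `s1 = σ₁²`, `s2 = σ₂²`, `hsq = |h|²`, `htsq = |h̃|²`. -/
theorem stmt_9 (P Pt s1 s2 hsq htsq α L : ℝ)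
    (hP : 0 < P) (hPt : 0 < Pt) (hs1 : 0 < s1) (hs2 : 0 < s2)
    (hhsq : 0 < hsq) (hhtsq : 0 < htsq) (hα : 0 < α) (hL : 0 < L)
    (hLlt : L < htsq * (Pt / s2))
    {Ω : Type*} [MeasurableSpace Ω] (μ : Measure Ω) [IsProbabilityMeasure μ]
    (ε N2 N1 : Ω → ℝ)
    (hindep : iIndepFun (m := fun _ : Fin 3 => (inferInstance : MeasurableSpace ℝ))
      ![ε, N2, N1] μ)
    (hε2 : MemLp ε 2 μ) (hN22 : MemLp N2 2 μ) (hN12 : MemLp N1 2 μ)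
    (hεmean : ∫ ω, ε ω ∂μ = 0) (hN2mean : ∫ ω, N2 ω ∂μ = 0)
    (hN1mean : ∫ ω, N1 ω ∂μ = 0)
    (hεvar : variance ε μ = α)
    (hN2var : variance N2 μ = s2 / (2 * htsq))
    (hN1var : variance N1 μ = s1 / (2 * hsq))
    (Y : Ω → ℝ)
    (hY : Y = fun ω =>
      Real.sqrt (L * P / Pt) * Real.sqrt ((Pt / (2 * L) - s2 / (2 * htsq)) / α) * ε ω
        + Real.sqrt (L * P / Pt) * N2 ω + N1 ω)
    (β : ℝ) (hβ : β = (∫ ω, Y ω * ε ω ∂μ) / (∫ ω, (Y ω) ^ 2 ∂μ)) :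
    ∫ ω, (ε ω - β * Y ω) ^ 2 ∂μ =
      α * (1 + (P / s1) * hsq /
        ((1 + L * hsq * (P / s1) / (htsq * (Pt / s2))) *
          (1 - L / (htsq * (Pt / s2)))⁻¹))⁻¹ := by
  set a := Real.sqrt (L * P / Pt)
  set g := Real.sqrt ((Pt / (2 * L) - s2 / (2 * htsq)) / α)
  have ha2 : a ^ 2 = L * P / Pt := Real.sq_sqrt (by positivity)
  have hg2 : g ^ 2 = (Pt / (2 * L) - s2 / (2 * htsq)) / α := by
    refine Real.sq_sqrt (div_nonneg (sub_nonneg.mpr ?_) hα.le)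
    rw [div_le_div_iff₀ (by positivity) (by positivity)]
    nlinarith [(lt_div_iff₀ hs2).mp (by rwa [← mul_div_assoc] at hLlt)]
  have hmoments := integral_mul_of_iIndepFun_three hindep hε2 hN22 hN12 hεmean hN2mean hN1mean
  simp only [hεvar, hN2var, hN1var] at hmoments
  set n := a ^ 2 * (s2 / (2 * htsq)) + s1 / (2 * hsq) with hn
  have hYε : ∫ ω, Y ω * ε ω ∂μ = a * g * α := by
    simpa [hY] using hmoments (a * g) a 1 1 0 0
  have hYY : ∫ ω, Y ω ^ 2 ∂μ = (a * g) ^ 2 * α + n := by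
    convert hmoments (a * g) a 1 (a * g) a 1 using 1
    · simp [hY, sq]
    · ring
  have herr : ∫ ω, (ε ω - β * Y ω) ^ 2 ∂μ = (1 - β * (a * g)) ^ 2 * α + β ^ 2 * n := by
    convert hmoments (1 - β * (a * g)) (-(β * a)) (-β) (1 - β * (a * g)) (-(β * a)) (-β) using 1
    · congr with ω
      rw [hY]
      ring
    · ring
  have hpow : (a * g) ^ 2 * α + n = P / 2 + s1 / (2 * hsq) := by
    rw [hn, mul_pow, ha2, hg2]
    field_simp
    ring
  rw [herr, hβ, hYε, hYY, lmmse_residual (by rw [hpow]; positivity), mul_div_assoc, hpow, hn, ha2,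
    contraction_factor_eq hP hPt hs1 hs2 hhsq hhtsq hL hLlt]
end

section
/- Let N ≥ 1 be an integer and let P, P̃, σ₁², σ₂², |h|², |h̃|², L be positive real numbers with L < |h̃|²·S̃NR, where SNR = P/σ₁² and S̃NR = P̃/σ₂². Let η_{1,1}, …, η_{1,N}, η_{2,1}, …, η_{2,N−1} be mutually independent square-integrable real random variables with mean 0, Var(η_{1,i}) = σ₁²/(2·|h|²) for all i, and Var(η_{2,i}) = σ₂²/(2·|h̃|²) for all i. Define recursively: ε_1 = η_{1,1}/√(P/2); and for 2 ≤ i ≤ N, with α_{i−1} = Var(ε_{i−1}), λ = √(L·P/P̃), γ_{i−1} = √((P̃/(2L) − σ₂²/(2|h̃|²))/α_{i−1}), Y_i = λ·γ_{i−1}·ε_{i−1} + λ·η_{2,i−1} + η_{1,i}, β_i = E[Y_i·ε_{i−1}]/E[Y_i²], and ε_i = ε_{i−1} − β_i·Y_i. Then for every 1 ≤ i ≤ N, Var(ε_i) = (|h|²·SNR)^{−1} · (1 + SNR·|h|²/(Ψ₁·Ψ₂))^{1−i}, where Ψ₁ = 1 + L·|h|²·SNR/(|h̃|²·S̃NR)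 and Ψ₂ = (1 − L/(|h̃|²·S̃NR))^{−1}. -/
/-!
Every error `ε n` is a linear combination of the noise samples the server has seen by time `n`,
so it is uncorrelated with the two fresh samples `η₂ n`, `η₁ (n+1)` entering the next round.
The update `ε - β Y` with `β = E[Yε]/E[Y²]` is then the linear MMSE correction, which multiplies
the error variance by `Var W / (a² Var ε + Var W)` for the fresh noise `W`; the choice of `γ`
makes `a² Var ε` constant, so this factor is the same in every round, namely
`(1 + SNR |h|²/(Ψ₁Ψ₂))⁻¹`.
-/

open MeasureTheory ProbabilityTheory

section

variable {Ω : Type*} [MeasurableSpace Ω] {μ : Measure Ω}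

theorem memLp_of_mem_span {p : ENNReal} {s : Set (Ω → ℝ)} (hs : ∀ f ∈ s, MemLp f p μ)
    {X : Ω → ℝ} (hX : X ∈ Submodule.span ℝ s) : MemLp X p μ := by
  induction hX using Submodule.span_induction with
  | mem f hf => exact hs f hf
  | zero => exact MemLp.zero
  | add f g _ _ hf hg => exact hf.add hg
  | smul c f _ hf => exact hf.const_smul c

theorem integral_eq_zero_of_mem_span {s : Set (Ω → ℝ)}
    (hs : ∀ f ∈ s, Integrable f μ ∧ ∫ ω, f ω ∂μ = 0) {X : Ω → ℝ}
    (hX : X ∈ Submodule.span ℝ s) : ∫ ω, X ω ∂μ = 0 := by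
  suffices Integrable X μ ∧ ∫ ω, X ω ∂μ = 0 from this.2
  induction hX using Submodule.span_induction with
  | mem f hf => exact hs f hf
  | zero => simp
  | add f g _ _ hf hg =>
    exact ⟨hf.1.add hg.1, by rw [Pi.add_def, integral_add hf.1 hg.1, hf.2, hg.2, add_zero]⟩
  | smul c f _ hf => exact ⟨hf.1.smul c, by
      simp only [Pi.smul_apply, smul_eq_mul]; rw [integral_const_mul, hf.2, mul_zero]⟩

theorem covariance_eq_zero_of_mem_span [IsFiniteMeasure μ] {s : Set (Ω → ℝ)}
    (hs : ∀ f ∈ s, MemLp f 2 μ) {Z : Ω → ℝ} (hZ : MemLp Z 2 μ)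
    (horth : ∀ f ∈ s, cov[f, Z; μ] = 0) {X : Ω → ℝ} (hX : X ∈ Submodule.span ℝ s) :
    cov[X, Z; μ] = 0 := by
  suffices MemLp X 2 μ ∧ cov[X, Z; μ] = 0 from this.2
  induction hX using Submodule.span_induction with
  | mem f hf => exact ⟨hs f hf, horth f hf⟩
  | zero => exact ⟨MemLp.zero, by simp⟩
  | add f g _ _ hf hg =>
    exact ⟨hf.1.add hg.1, by rw [covariance_add_left hf.1 hg.1 hZ, hf.2, hg.2, add_zero]⟩
  | smul c f _ hf => exact ⟨hf.1.const_smul c, by rw [covariance_smul_left, hf.2, mul_zero]⟩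

theorem variance_const_mul_add_const_mul [IsFiniteMeasure μ] {X W : Ω → ℝ} (hX : MemLp X 2 μ)
    (hW : MemLp W 2 μ) (hXW : cov[X, W; μ] = 0) (a b : ℝ) :
    Var[fun ω => a * X ω + b * W ω; μ] = a ^ 2 * Var[X; μ] + b ^ 2 * Var[W; μ] := by
  rw [variance_fun_add (hX.const_mul a) (hW.const_mul b), covariance_const_mul_left,
    covariance_const_mul_right, hXW, variance_const_mul, variance_const_mul]
  ring

theorem variance_sub_lmmse [IsProbabilityMeasure μ] {X W : Ω → ℝ} (hX : MemLp X 2 μ)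
    (hW : MemLp W 2 μ) (hX0 : ∫ ω, X ω ∂μ = 0) (hW0 : ∫ ω, W ω ∂μ = 0)
    (hXW : cov[X, W; μ] = 0) (a : ℝ) (hD : a ^ 2 * Var[X; μ] + Var[W; μ] ≠ 0) :
    Var[fun ω => X ω - (∫ ω, (a * X ω + W ω) * X ω ∂μ) / (∫ ω, (a * X ω + W ω) ^ 2 ∂μ)
        * (a * X ω + W ω); μ] = Var[X; μ] * Var[W; μ] / (a ^ 2 * Var[X; μ] + Var[W; μ]) := by
  have hY : MemLp (fun ω => a * X ω + W ω) 2 μ := (hX.const_mul a).add hW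
  have hY0 : ∫ ω, a * X ω + W ω ∂μ = 0 := by
    rw [integral_add (hX.integrable one_le_two |>.const_mul a) (hW.integrable one_le_two),
      integral_const_mul, hX0, hW0, mul_zero, add_zero]
  have hYX : ∫ ω, (a * X ω + W ω) * X ω ∂μ = a * Var[X; μ] := by
    have h := covariance_eq_sub hY hX
    rw [hX0, mul_zero, sub_zero] at h
    refine h.symm.trans ?_
    rw [show (fun ω => a * X ω + W ω) = (fun ω => a * X ω) + W from rfl,
      covariance_add_left (hX.const_mul a) hW hX,
      covariance_const_mul_left, covariance_self hX.aemeasurable, covariance_comm, hXW, add_zero]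
  have hYY : ∫ ω, (a * X ω + W ω) ^ 2 ∂μ = a ^ 2 * Var[X; μ] + Var[W; μ] := by
    rw [← variance_of_integral_eq_zero hY.aemeasurable hY0]
    simpa using variance_const_mul_add_const_mul hX hW hXW a 1
  rw [hYX, hYY]
  have h := fun β : ℝ => variance_const_mul_add_const_mul hX hW hXW (1 - β * a) (-β)
  simp only [show ∀ β ω, (1 - β * a) * X ω + -β * W ω = X ω - β * (a * X ω + W ω) from
    fun β ω => by ring] at h
  rw [h]
  field_simp
  ring

theorem variance_sub_lmmse_of_mem_span [IsProbabilityMeasure μ] {ι : Type*} {F : ι → Ω → ℝ}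
    (hF : iIndepFun F μ) (hF2 : ∀ k, MemLp (F k) 2 μ) (hF0 : ∀ k, ∫ ω, F k ω ∂μ = 0)
    {T : Set ι} {k l : ι} (hk : k ∉ T) (hl : l ∉ T) (hkl : k ≠ l)
    {X : Ω → ℝ} (hX : X ∈ Submodule.span ℝ (F '' T)) {Y : Ω → ℝ} {a b β : ℝ}
    (hY : Y = fun ω => a * X ω + b * F k ω + F l ω)
    (hβ : β = (∫ ω, Y ω * X ω ∂μ) / (∫ ω, Y ω ^ 2 ∂μ))
    (hD : a ^ 2 * Var[X; μ] + (b ^ 2 * Var[F k; μ] + Var[F l; μ]) ≠ 0) :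
    Var[fun ω => X ω - β * Y ω; μ] = Var[X; μ] * (b ^ 2 * Var[F k; μ] + Var[F l; μ]) /
      (a ^ 2 * Var[X; μ] + (b ^ 2 * Var[F k; μ] + Var[F l; μ])) := by
  have hT2 : ∀ f ∈ F '' T, MemLp f 2 μ := by rintro _ ⟨j, -, rfl⟩; exact hF2 j
  have hT0 : ∀ f ∈ F '' T, Integrable f μ ∧ ∫ ω, f ω ∂μ = 0 := by
    rintro _ ⟨j, -, rfl⟩; exact ⟨(hF2 j).integrable one_le_two, hF0 j⟩
  have horth : ∀ {m}, m ∉ T → cov[X, F m; μ] = 0 := fun hm =>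
    covariance_eq_zero_of_mem_span hT2 (hF2 _) (by
      rintro _ ⟨j, hj, rfl⟩
      exact (hF.indepFun (ne_of_mem_of_not_mem hj hm)).covariance_eq_zero (hF2 j) (hF2 _)) hX
  have hX2 := memLp_of_mem_span hT2 hX
  have hW2 : MemLp (fun ω => b * F k ω + F l ω) 2 μ := ((hF2 k).const_mul b).add (hF2 l)
  have hW0 : ∫ ω, b * F k ω + F l ω ∂μ = 0 := by
    rw [integral_add (((hF2 k).integrable one_le_two).const_mul b) ((hF2 l).integrable one_le_two),
      integral_const_mul, hF0, hF0, mul_zero, add_zero]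
  have hXW : cov[X, fun ω => b * F k ω + F l ω; μ] = 0 := by
    rw [show (fun ω => b * F k ω + F l ω) = (fun ω => b * F k ω) + F l from rfl,
      covariance_add_right hX2 ((hF2 k).const_mul b) (hF2 l), covariance_const_mul_right,
      horth hk, horth hl, mul_zero, add_zero]
  have hVarW : Var[fun ω => b * F k ω + F l ω; μ] = b ^ 2 * Var[F k; μ] + Var[F l; μ] := by
    simpa using variance_const_mul_add_const_mul (hF2 k) (hF2 l)
      ((hF.indepFun hkl).covariance_eq_zero (hF2 k) (hF2 l)) b 1
  have h := variance_sub_lmmse hX2 hW2 (integral_eq_zero_of_mem_span hT0 hX) hW0 hXW a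
    (by rwa [hVarW])
  rw [hVarW] at h
  subst hY hβ
  simpa only [add_assoc] using h

end

def noiseFamily {Ω : Type*} (N : ℕ) (η1 η2 : ℕ → Ω → ℝ) : Fin N ⊕ Fin (N - 1) → Ω → ℝ :=
  Sum.elim (fun i => η1 (i.1 + 1)) (fun j => η2 (j.1 + 1))

/-- `.inl i` indexes `η₁ (i + 1)`, received at time `i + 1`, and `.inr j` indexes `η₂ (j + 1)`,
which enters the scheme at time `j + 2`. -/
def observedBy (N n : ℕ) : Set (Fin N ⊕ Fin (N - 1)) :=
  {k | Sum.elim (fun i => i.1 < n) (fun j => j.1 + 1 < n) k}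

theorem noiseFamily_forall {Ω : Type*} {N : ℕ} {η1 η2 : ℕ → Ω → ℝ} {p : (Ω → ℝ) → Prop}
    (h1 : ∀ i, 1 ≤ i → i ≤ N → p (η1 i)) (h2 : ∀ i, 1 ≤ i → i ≤ N - 1 → p (η2 i)) :
    ∀ k, p (noiseFamily N η1 η2 k)
  | .inl i => h1 _ le_add_self i.2
  | .inr j => h2 _ le_add_self j.2

theorem skError_mem_span {Ω : Type*} {N : ℕ} (hN : 1 ≤ N) {η1 η2 ε Y : ℕ → Ω → ℝ}
    {γ β : ℕ → ℝ} {c lam : ℝ} (hε1 : ε 1 = fun ω => η1 1 ω / c)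
    (hYdef : ∀ i, 2 ≤ i → i ≤ N →
      Y i = fun ω => lam * γ (i - 1) * ε (i - 1) ω + lam * η2 (i - 1) ω + η1 i ω)
    (hεi : ∀ i, 2 ≤ i → i ≤ N → ε i = fun ω => ε (i - 1) ω - β i * Y i ω) :
    ∀ n, 1 ≤ n → n ≤ N → ε n ∈ Submodule.span ℝ (noiseFamily N η1 η2 '' observedBy N n) := by
  intro n hn
  induction n, hn using Nat.le_induction with
  | base =>
    intro _
    have hε : ε 1 = c⁻¹ • noiseFamily N η1 η2 (.inl ⟨0, hN⟩) := by
      rw [hε1]; funext ω; simp [noiseFamily, div_eq_inv_mul]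
    rw [hε]
    exact Submodule.smul_mem _ _ (Submodule.subset_span ⟨_, by simp [observedBy], rfl⟩)
  | succ n hn ih =>
    intro hnN
    obtain ⟨m, rfl⟩ : ∃ m, n = m + 1 := ⟨n - 1, by omega⟩
    have hmono : Submodule.span ℝ (noiseFamily N η1 η2 '' observedBy N (m + 1)) ≤
        Submodule.span ℝ (noiseFamily N η1 η2 '' observedBy N (m + 2)) := by
      refine Submodule.span_mono (Set.image_mono fun k hk => ?_)
      rcases k with i | j <;> simp only [observedBy, Set.mem_ofPred_eq, Sum.elim_inl,
        Sum.elim_inr] at hk ⊢ <;> omega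
    have hfresh : ∀ k ∈ observedBy N (m + 2),
        noiseFamily N η1 η2 k ∈ Submodule.span ℝ (noiseFamily N η1 η2 '' observedBy N (m + 2)) :=
      fun k hk => Submodule.subset_span ⟨k, hk, rfl⟩
    have hε : ε (m + 2) = ε (m + 1) - β (m + 2) • ((lam * γ (m + 1)) • ε (m + 1)
        + lam • noiseFamily N η1 η2 (.inr ⟨m, by omega⟩)
        + noiseFamily N η1 η2 (.inl ⟨m + 1, by omega⟩)) := by
      rw [hεi (m + 2) (by omega) hnN, hYdef (m + 2) (by omega) hnN]
      rfl
    have hεm := hmono (ih (by omega))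
    rw [hε]
    refine sub_mem hεm (Submodule.smul_mem _ _ (add_mem (add_mem (Submodule.smul_mem _ _ hεm)
      (Submodule.smul_mem _ _ (hfresh _ ?_))) (hfresh _ ?_))) <;> simp [observedBy]

theorem one_add_snr_div_psi_eq {P Pt s1 s2 hsq htsq L : ℝ} (hP : 0 < P) (hPt : 0 < Pt)
    (hs1 : 0 < s1) (hs2 : 0 < s2) (hhsq : 0 < hsq) (hhtsq : 0 < htsq) (hL : 0 < L)
    (hLlt : L < htsq * (Pt / s2)) :
    1 + (P / s1) * hsq / ((1 + L * hsq * (P / s1) / (htsq * (Pt / s2))) *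
        (1 - L / (htsq * (Pt / s2)))⁻¹) =
      (P / 2 + s1 / (2 * hsq)) / (s1 / (2 * hsq) + L * P / Pt * (s2 / (2 * htsq))) := by
  have hΨ₂ : 1 - L / (htsq * (Pt / s2)) ≠ 0 :=
    (sub_pos.2 ((div_lt_one (by positivity)).2 hLlt)).ne'
  field_simp
  ring

theorem lmmse_ratio_eq_inv_gain {P Pt s1 s2 hsq htsq L V γ : ℝ} (hP : 0 < P) (hPt : 0 < Pt)
    (hs2 : 0 < s2) (hhsq : 0 < hsq) (hhtsq : 0 < htsq) (hL : 0 < L)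
    (hLlt : L < htsq * (Pt / s2)) (hV : 0 < V)
    (hγ : γ = Real.sqrt ((Pt / (2 * L) - s2 / (2 * htsq)) / V)) :
    V * (Real.sqrt (L * P / Pt) ^ 2 * (s2 / (2 * htsq)) + s1 / (2 * hsq)) /
        ((Real.sqrt (L * P / Pt) * γ) ^ 2 * V +
          (Real.sqrt (L * P / Pt) ^ 2 * (s2 / (2 * htsq)) + s1 / (2 * hsq))) =
      V * ((P / 2 + s1 / (2 * hsq)) / (s1 / (2 * hsq) + L * P / Pt * (s2 / (2 * htsq))))⁻¹ := by
  have hq : 0 < Pt / (2 * L) - s2 / (2 * htsq) := by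
    rw [← mul_div_assoc, lt_div_iff₀ hs2] at hLlt
    rw [sub_pos, div_lt_div_iff₀ (by positivity) (by positivity)]
    nlinarith
  have hD : L * P / Pt * (Pt / (2 * L) - s2 / (2 * htsq) + s2 / (2 * htsq)) + s1 / (2 * hsq) =
      P / 2 + s1 / (2 * hsq) := by
    field_simp
    ring
  rw [mul_pow, Real.sq_sqrt (by positivity), hγ, Real.sq_sqrt (by positivity), inv_div,
    mul_assoc (L * P / Pt), div_mul_cancel₀ _ hV.ne', ← add_assoc, ← mul_add, hD]
  ring

/-- Closed-form error variance in the (idealized, no modulo-aliasing)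
Schalkwijk–Kailath-type iteration: with `SNR = P/σ₁²`, `S̃NR = P̃/σ₂²`,
`Ψ₁ = 1 + L|h|²SNR/(|h̃|²S̃NR)`, `Ψ₂ = (1 − L/(|h̃|²S̃NR))⁻¹`, the decoding error at time
`i` satisfies `Var(ε_i) = (|h|²SNR)⁻¹·(1 + SNR|h|²/(Ψ₁Ψ₂))^{1−i}` for `1 ≤ i ≤ N`.
Here `s1 = σ₁²`, `s2 = σ₂²`, `hsq = |h|²`, `htsq = |h̃|²`. -/
theorem stmt_12 (N : ℕ) (hN : 1 ≤ N)
    (P Pt s1 s2 hsq htsq L : ℝ)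
    (hP : 0 < P) (hPt : 0 < Pt) (hs1 : 0 < s1) (hs2 : 0 < s2)
    (hhsq : 0 < hsq) (hhtsq : 0 < htsq) (hL : 0 < L)
    (hLlt : L < htsq * (Pt / s2))
    {Ω : Type*} [MeasurableSpace Ω] (μ : Measure Ω) [IsProbabilityMeasure μ]
    (η1 η2 : ℕ → Ω → ℝ)
    (hindep : iIndepFun
      (Sum.elim (fun i : Fin N => η1 (i.1 + 1)) (fun i : Fin (N - 1) => η2 (i.1 + 1))) μ)
    (hη1L2 : ∀ i, 1 ≤ i → i ≤ N → MemLp (η1 i) 2 μ)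
    (hη2L2 : ∀ i, 1 ≤ i → i ≤ N - 1 → MemLp (η2 i) 2 μ)
    (hη1mean : ∀ i, 1 ≤ i → i ≤ N → ∫ ω, η1 i ω ∂μ = 0)
    (hη2mean : ∀ i, 1 ≤ i → i ≤ N - 1 → ∫ ω, η2 i ω ∂μ = 0)
    (hη1var : ∀ i, 1 ≤ i → i ≤ N → variance (η1 i) μ = s1 / (2 * hsq))
    (hη2var : ∀ i, 1 ≤ i → i ≤ N - 1 → variance (η2 i) μ = s2 / (2 * htsq))
    (ε Y : ℕ → Ω → ℝ) (γ β : ℕ → ℝ)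
    (hε1 : ε 1 = fun ω => η1 1 ω / Real.sqrt (P / 2))
    (hγ : ∀ i, 2 ≤ i → i ≤ N →
      γ (i - 1) =
        Real.sqrt ((Pt / (2 * L) - s2 / (2 * htsq)) / variance (ε (i - 1)) μ))
    (hYdef : ∀ i, 2 ≤ i → i ≤ N →
      Y i = fun ω => Real.sqrt (L * P / Pt) * γ (i - 1) * ε (i - 1) ω
        + Real.sqrt (L * P / Pt) * η2 (i - 1) ω + η1 i ω)
    (hβ : ∀ i, 2 ≤ i → i ≤ N →
      β i = (∫ ω, Y i ω * ε (i - 1) ω ∂μ) / (∫ ω, (Y i ω) ^ 2 ∂μ))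
    (hεi : ∀ i, 2 ≤ i → i ≤ N → ε i = fun ω => ε (i - 1) ω - β i * Y i ω) :
    ∀ i, 1 ≤ i → i ≤ N →
      variance (ε i) μ = (hsq * (P / s1))⁻¹ *
        (1 + (P / s1) * hsq /
          ((1 + L * hsq * (P / s1) / (htsq * (Pt / s2))) *
            (1 - L / (htsq * (Pt / s2)))⁻¹)) ^ ((1 : ℤ) - (i : ℤ)) := by
  have hF2 := noiseFamily_forall (p := fun f => MemLp f 2 μ) hη1L2 hη2L2
  have hF0 := noiseFamily_forall (p := fun f => ∫ ω, f ω ∂μ = 0) hη1mean hη2mean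
  have hspan := skError_mem_span hN hε1 hYdef hεi
  intro n hn
  rw [one_add_snr_div_psi_eq hP hPt hs1 hs2 hhsq hhtsq hL hLlt]
  induction n, hn using Nat.le_induction with
  | base =>
    intro _
    have hε : ε 1 = fun ω => η1 1 ω * (Real.sqrt (P / 2))⁻¹ := by simp_rw [hε1, div_eq_mul_inv]
    rw [hε, variance_mul_const, hη1var 1 le_rfl hN, inv_pow,
      Real.sq_sqrt (by positivity : 0 ≤ P / 2), Nat.cast_one, sub_self, zpow_zero, mul_one]
    field_simp
  | succ n hn ih =>
    intro hnN
    obtain ⟨m, rfl⟩ : ∃ m, n = m + 1 := ⟨n - 1, by omega⟩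
    have hV := ih (by omega)
    have hε := hεi (m + 1 + 1) (by omega) hnN
    have hY := hYdef (m + 1 + 1) (by omega) hnN
    have hβ' := hβ (m + 1 + 1) (by omega) hnN
    have hγ' := hγ (m + 1 + 1) (by omega) hnN
    simp only [Nat.add_sub_cancel] at hε hY hβ' hγ'
    rw [hε, variance_sub_lmmse_of_mem_span (F := noiseFamily N η1 η2) hindep hF2 hF0
      (k := .inr ⟨m, by omega⟩) (l := .inl ⟨m + 1, by omega⟩) (by simp [observedBy])
      (by simp [observedBy]) Sum.inr_ne_inl (hspan (m + 1) (by omega) (by omega)) hY hβ' ?_]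
    all_goals
      simp only [noiseFamily, Sum.elim_inr, Sum.elim_inl]
      rw [hη2var (m + 1) (by omega) (by omega), hη1var (m + 2) (by omega) hnN]
    · rw [lmmse_ratio_eq_inv_gain hP hPt hs2 hhsq hhtsq hL hLlt (by rw [hV]; positivity) hγ', hV,
        mul_assoc, ← zpow_sub_one₀ (by positivity)]
      congr 2
      push_cast
      ring
    · exact (add_pos_of_nonneg_of_pos (mul_nonneg (sq_nonneg _) (variance_nonneg _ _))
        (by positivity)).ne'
end
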